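/- arXiv:1304.4894 — 2 statements merged into one kernel-verified Lean document; each statement's English description precedes it below -/
import Mathlib

section
/- Let J = [0,∞) and let f : J → ℝ be differentiable on the interior of J with f' integrable on [u,v], where u, v ∈ J and 0 < u < v. Let q ≥ 1. If |f'|^q is convex on [u,v], then for every x ∈ [u,v]: |((v-x)(v·f(v) - u·f(x)) + (x-u)(v·f(x) - u·f(u)))/(v-u)² - (1/(v-u))·∫_u^v f(μ) dμ| ≤ ((v-x)²/(v-u)²)·A(u,v)^{1-1/q}·(1/6)^{1/q}·((2u+v)·|f'(x)|^q + (2v+u)·|f'(v)|^q)^{1/q} + ((x-u)²/(v-u)²)·A(u,v)^{1-1/q}·(1/6)^{1/q}·((2v+u)·|f'(x)|^q + (2u+v)·|f'(u)|^q)^{1/q}. -/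
/-!
Integration by parts against the affine weight `w t = u (b - t) + v (t - a)` on `[a, b] = [x, v]`
and on `[a, b] = [u, x]` writes the left-hand side as the sum of the two integrals `∫ w f'`,
divided by `(v - u)²`. By Hölder, `|∫ w f'| ≤ (∫ w)^(1-1/q) (∫ w |f'|^q)^(1/q)`, and since the
convex function `|f'|^q` lies below its chord, `∫ w |f'|^q` is at most the integral of a product of
two affine functions: this is where `2u + v`, `2v + u` and `1/6` come from.
-/

open MeasureTheory Set intervalIntegral

theorem integral_mul_le_weight_mul_Lp_of_nonneg {α : Type*} [MeasurableSpace α] {μ : Measure α}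
    {q : ℝ} (hq : 1 ≤ q) {w g : α → ℝ} (hw : 0 ≤ᵐ[μ] w) (hg : 0 ≤ᵐ[μ] g)
    (hw_int : Integrable w μ) (hg_meas : AEStronglyMeasurable g μ)
    (hwg_int : Integrable (fun a ↦ w a * g a ^ q) μ) :
    ∫ a, w a * g a ∂μ ≤ (∫ a, w a ∂μ) ^ (1 - q⁻¹) * (∫ a, w a * g a ^ q ∂μ) ^ q⁻¹ := by
  rcases hq.eq_or_lt with rfl | hq
  · simp
  -- Hölder with exponents `q / (q - 1)` and `q` applied to `w ^ (1 - 1/q)` and `w ^ (1/q) * g`.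
  set p := q / (q - 1)
  have hpq : p.HolderConjugate q :=
    Real.holderConjugate_comm.1 ((Real.holderConjugate_iff_eq_conjExponent hq).2 rfl)
  have hq0 : 0 < q := by linarith
  have hp_inv : p⁻¹ = 1 - q⁻¹ := by
    simp only [p]
    field_simp
  have hF_pow : ∀ᵐ a ∂μ, (w a ^ (1 - q⁻¹)) ^ p = w a := by
    filter_upwards [hw] with a ha
    rw [← Real.rpow_mul ha, ← hp_inv, inv_mul_cancel₀ hpq.ne_zero, Real.rpow_one]
  have hG_pow : ∀ᵐ a ∂μ, (w a ^ q⁻¹ * g a) ^ q = w a * g a ^ q := by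
    filter_upwards [hw, hg] with a ha hga
    rw [Real.mul_rpow (Real.rpow_nonneg ha _) hga, ← Real.rpow_mul ha,
      inv_mul_cancel₀ hq0.ne', Real.rpow_one]
  have hwm := hw_int.aestronglyMeasurable.aemeasurable
  have hF : MemLp (fun a ↦ w a ^ (1 - q⁻¹)) (ENNReal.ofReal p) μ := by
    refine (integrable_norm_rpow_iff (hwm.pow_const _).aestronglyMeasurable
      (by simp [hpq.pos]) ENNReal.ofReal_ne_top).1 ?_
    refine hw_int.congr ?_
    filter_upwards [hw, hF_pow] with a ha h
    rw [ENNReal.toReal_ofReal hpq.nonneg, Real.norm_of_nonneg (Real.rpow_nonneg ha _), h]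
  have hG : MemLp (fun a ↦ w a ^ q⁻¹ * g a) (ENNReal.ofReal q) μ := by
    refine (integrable_norm_rpow_iff
      ((hwm.pow_const _).aestronglyMeasurable.mul hg_meas)
      (by simp [hq0]) ENNReal.ofReal_ne_top).1 ?_
    refine hwg_int.congr ?_
    filter_upwards [hw, hg, hG_pow] with a ha hga h
    rw [ENNReal.toReal_ofReal hq0.le, Pi.mul_apply,
      Real.norm_of_nonneg (mul_nonneg (Real.rpow_nonneg ha _) hga), h]
  have hholder := integral_mul_le_Lp_mul_Lq_of_nonneg hpq
    (hw.mono fun a ha ↦ Real.rpow_nonneg ha _)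
    (hw.mp (hg.mono fun a hga ha ↦ mul_nonneg (Real.rpow_nonneg ha _) hga)) hF hG
  calc ∫ a, w a * g a ∂μ = ∫ a, w a ^ (1 - q⁻¹) * (w a ^ q⁻¹ * g a) ∂μ := by
        refine integral_congr_ae ?_
        filter_upwards [hw] with a ha
        rw [← mul_assoc, ← Real.rpow_add' ha (by simp), sub_add_cancel, Real.rpow_one]
    _ ≤ _ := hholder
    _ = _ := by
        rw [integral_congr_ae hF_pow, integral_congr_ae hG_pow, one_div, one_div, hp_inv]

theorem ConvexOn.sub_mul_le_of_mem_Icc {s : Set ℝ} {φ : ℝ → ℝ} (hφ : ConvexOn ℝ s φ) {x y z : ℝ}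
    (hx : x ∈ s) (hz : z ∈ s) (hy : y ∈ Icc x z) :
    (z - x) * φ y ≤ (z - y) * φ x + (y - x) * φ z := by
  rcases hy.1.eq_or_lt with rfl | hxy
  · simp
  rcases hy.2.eq_or_lt with rfl | hyz
  · simp
  exact hφ.secant_mono_aux1 hx hz hxy hyz

theorem integral_affine (a b c d : ℝ) :
    ∫ t in a..b, (c * (b - t) + d * (t - a)) = (b - a) ^ 2 * ((c + d) / 2) := by
  rw [integral_deriv_eq_sub' (fun t ↦ d * (t - a) ^ 2 / 2 - c * (b - t) ^ 2 / 2)]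
  · ring
  · ext t
    simp (disch := fun_prop) only [deriv_fun_sub, deriv_div_const, deriv_fun_mul, deriv_const',
      zero_mul, deriv_fun_pow, Nat.cast_ofNat, Nat.add_one_sub_one, pow_one, deriv_id'', sub_zero,
      mul_one, zero_add, deriv_const_sub_id', mul_neg]
    ring
  · fun_prop
  · fun_prop

theorem integral_affine_mul_affine (a b c d A B : ℝ) :
    ∫ t in a..b, (c * (b - t) + d * (t - a)) * ((b - t) * A + (t - a) * B) =
      (b - a) ^ 3 * ((2 * c + d) * A + (2 * d + c) * B) / 6 := by
  rw [integral_deriv_eq_sub' (fun t ↦ d * B * (t - a) ^ 3 / 3 - c * A * (b - t) ^ 3 / 3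
      + (c * B + d * A) * ((b - a) * (t - a) ^ 2 / 2 - (t - a) ^ 3 / 3))]
  · ring
  · ext t
    simp (disch := fun_prop) only [deriv_fun_add, deriv_fun_sub, deriv_div_const, deriv_fun_mul,
      deriv_const', zero_mul, mul_zero, add_zero, deriv_fun_pow, Nat.cast_ofNat,
      Nat.add_one_sub_one, deriv_id'', sub_zero, mul_one, zero_add, deriv_const_sub_id', mul_neg,
      sub_self, pow_one]
    ring
  · fun_prop
  · fun_prop

theorem integral_affine_mul_deriv {f f' : ℝ → ℝ} {a b : ℝ} (c d : ℝ)
    (hf : ∀ t ∈ uIcc a b, HasDerivAt f (f' t) t) (hf' : IntervalIntegrable f' volume a b) :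
    ∫ t in a..b, (c * (b - t) + d * (t - a)) * f' t =
      (b - a) * (d * f b - c * f a) - (d - c) * ∫ t in a..b, f t := by
  have hw : ∀ t ∈ uIcc a b, HasDerivAt (fun t ↦ c * (b - t) + d * (t - a)) (d - c) t := by
    intro t _
    exact ((((hasDerivAt_id' t).const_sub b).const_mul c).fun_add
      (((hasDerivAt_id' t).sub_const a).const_mul d)).congr_deriv (by ring)
  rw [integral_mul_deriv_eq_deriv_mul hw hf intervalIntegrable_const hf',
    intervalIntegral.integral_const_mul]
  ring

theorem intervalIntegral.abs_integral_mul_le_weight_mul_Lp {w g : ℝ → ℝ} {a b q : ℝ}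
    (hq : 1 ≤ q) (hab : a ≤ b) (hw : ∀ t ∈ Icc a b, 0 ≤ w t)
    (hw_int : IntervalIntegrable w volume a b) (hg : IntervalIntegrable g volume a b)
    (hwg_int : IntervalIntegrable (fun t ↦ w t * |g t| ^ q) volume a b) :
    |∫ t in a..b, w t * g t| ≤
      (∫ t in a..b, w t) ^ (1 - q⁻¹) * (∫ t in a..b, w t * |g t| ^ q) ^ q⁻¹ := by
  have hw_ae : 0 ≤ᵐ[volume.restrict (Ioc a b)] w :=
    (ae_restrict_mem measurableSet_Ioc).mono fun t ht ↦ hw t (Ioc_subset_Icc_self ht)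
  have habs : ∫ t in a..b, |w t * g t| = ∫ t in a..b, w t * |g t| := by
    refine integral_congr fun t ht ↦ ?_
    rw [uIcc_of_le hab] at ht
    rw [abs_mul, abs_of_nonneg (hw t ht)]
  refine (abs_integral_le_integral_abs hab).trans_eq habs |>.trans ?_
  simp only [integral_of_le hab]
  exact integral_mul_le_weight_mul_Lp_of_nonneg hq hw_ae (ae_of_all _ fun t ↦ abs_nonneg _)
    hw_int.1 (continuous_abs.comp_aestronglyMeasurable hg.1.aestronglyMeasurable) hwg_int.1

theorem ConvexOn.intervalIntegrable_of_nonneg {φ : ℝ → ℝ} {a b : ℝ} (hab : a ≤ b)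
    (hφ : ConvexOn ℝ (Icc a b) φ) (hφ_nonneg : ∀ t ∈ Icc a b, 0 ≤ φ t)
    (hφ_meas : AEStronglyMeasurable φ (volume.restrict (uIoc a b))) :
    IntervalIntegrable φ volume a b := by
  refine IntervalIntegrable.mono_fun' (g := fun _ ↦ max (φ a) (φ b)) intervalIntegrable_const
    hφ_meas ?_
  filter_upwards [ae_restrict_mem measurableSet_uIoc] with t ht
  rw [uIoc_of_le hab] at ht
  have ht := Ioc_subset_Icc_self ht
  rw [Real.norm_of_nonneg (hφ_nonneg t ht)]
  exact hφ.le_max_of_mem_Icc (left_mem_Icc.2 hab) (right_mem_Icc.2 hab) ht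

theorem integral_affine_mul_le_of_convexOn {φ : ℝ → ℝ} {a b c d : ℝ} (hab : a < b) (hc : 0 ≤ c)
    (hd : 0 ≤ d) (hφ : ConvexOn ℝ (Icc a b) φ)
    (hφ_int : IntervalIntegrable (fun t ↦ (c * (b - t) + d * (t - a)) * φ t) volume a b) :
    ∫ t in a..b, (c * (b - t) + d * (t - a)) * φ t ≤
      (b - a) ^ 2 * (((2 * c + d) * φ a + (2 * d + c) * φ b) / 6) := calc
  _ ≤ ∫ t in a..b, (c * (b - t) + d * (t - a)) * (((b - t) * φ a + (t - a) * φ b) / (b - a)) := by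
      refine integral_mono_on hab.le hφ_int (Continuous.intervalIntegrable (by fun_prop) _ _)
        fun t ht ↦ mul_le_mul_of_nonneg_left ?_ ?_
      · exact (le_div_iff₀' (sub_pos.2 hab)).2
          (hφ.sub_mul_le_of_mem_Icc (left_mem_Icc.2 hab.le) (right_mem_Icc.2 hab.le) ht)
      · exact add_nonneg (mul_nonneg hc (sub_nonneg.2 ht.2)) (mul_nonneg hd (sub_nonneg.2 ht.1))
  _ = _ := by
      simp_rw [mul_div_assoc']
      rw [intervalIntegral.integral_div, integral_affine_mul_affine]
      field_simp

theorem abs_integral_affine_mul_le_of_convexOn {g : ℝ → ℝ} {a b c d q : ℝ} (hq : 1 ≤ q)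
    (hab : a ≤ b) (hc : 0 ≤ c) (hd : 0 ≤ d) (hg : IntervalIntegrable g volume a b)
    (hconv : ConvexOn ℝ (Icc a b) (fun t ↦ |g t| ^ q)) :
    |∫ t in a..b, (c * (b - t) + d * (t - a)) * g t| ≤
      (b - a) ^ 2 * ((c + d) / 2) ^ (1 - 1 / q) * (1 / 6) ^ (1 / q) *
        ((2 * c + d) * |g a| ^ q + (2 * d + c) * |g b| ^ q) ^ (1 / q) := by
  rcases hab.eq_or_lt with rfl | hab
  · simp
  set S := (2 * c + d) * |g a| ^ q + (2 * d + c) * |g b| ^ q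
  have hw : ∀ t ∈ Icc a b, 0 ≤ c * (b - t) + d * (t - a) := fun t ht ↦
    add_nonneg (mul_nonneg hc (sub_nonneg.2 ht.2)) (mul_nonneg hd (sub_nonneg.2 ht.1))
  have hg_meas := continuous_abs.comp_aestronglyMeasurable hg.def'.aestronglyMeasurable
  have hgq_int : IntervalIntegrable (fun t ↦ |g t| ^ q) volume a b :=
    hconv.intervalIntegrable_of_nonneg hab.le (fun t _ ↦ by positivity)
      (hg_meas.aemeasurable.pow_const q).aestronglyMeasurable
  have hwgq_int := hgq_int.continuousOn_mul (g := fun t ↦ c * (b - t) + d * (t - a))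
    (by fun_prop)
  have hwgq_nonneg : 0 ≤ ∫ t in a..b, (c * (b - t) + d * (t - a)) * |g t| ^ q :=
    intervalIntegral.integral_nonneg hab.le fun t ht ↦ mul_nonneg (hw t ht) (by positivity)
  have hS : 0 ≤ S := add_nonneg (mul_nonneg (by linarith) (by positivity))
    (mul_nonneg (by linarith) (by positivity))
  have hsq : ((b - a) ^ 2) ^ (1 - q⁻¹) * ((b - a) ^ 2) ^ q⁻¹ = (b - a) ^ 2 := by
    rw [← Real.rpow_add' (by positivity) (by simp), sub_add_cancel, Real.rpow_one]
  calc _ ≤ _ := abs_integral_mul_le_weight_mul_Lp hq hab.le hw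
        (Continuous.intervalIntegrable (by fun_prop) _ _) hg hwgq_int
    _ ≤ ((b - a) ^ 2 * ((c + d) / 2)) ^ (1 - q⁻¹) * ((b - a) ^ 2 * (1 / 6 * S)) ^ q⁻¹ := by
        rw [integral_affine]
        gcongr
        exact (integral_affine_mul_le_of_convexOn hab hc hd hconv hwgq_int).trans_eq (by ring)
    _ = _ := by
        rw [one_div q, Real.mul_rpow (by positivity) (by linarith),
          Real.mul_rpow (by positivity) (by positivity), Real.mul_rpow (by norm_num) hS]
        linear_combination (((c + d) / 2) ^ (1 - q⁻¹) * (1 / 6) ^ q⁻¹ * S ^ q⁻¹) * hsq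

theorem sub_average_eq_integral_affine_mul_deriv {f f' : ℝ → ℝ} {u v x : ℝ} (huv : u < v)
    (hx : x ∈ Icc u v) (hf : ∀ t ∈ Icc u v, HasDerivAt f (f' t) t)
    (hf' : IntervalIntegrable f' volume u v) :
    ((v - x) * (v * f v - u * f x) + (x - u) * (v * f x - u * f u)) / (v - u) ^ 2
        - (1 / (v - u)) * ∫ t in u..v, f t =
      ((∫ t in x..v, (u * (v - t) + v * (t - x)) * f' t)
        + ∫ t in u..x, (u * (x - t) + v * (t - u)) * f' t) / (v - u) ^ 2 := by
  have hxv : uIcc x v ⊆ Icc u v := by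
    rw [uIcc_of_le hx.2]; exact Icc_subset_Icc hx.1 le_rfl
  have hux : uIcc u x ⊆ Icc u v := by
    rw [uIcc_of_le hx.1]; exact Icc_subset_Icc le_rfl hx.2
  have hfc : ContinuousOn f (Icc u v) := fun t ht ↦ (hf t ht).continuousAt.continuousWithinAt
  have hx' : x ∈ uIcc u v := Icc_subset_uIcc hx
  rw [integral_affine_mul_deriv u v (fun t ht ↦ hf t (hxv ht))
      (hf'.mono_set (uIcc_subset_uIcc hx' right_mem_uIcc)),
    integral_affine_mul_deriv u v (fun t ht ↦ hf t (hux ht))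
      (hf'.mono_set (uIcc_subset_uIcc left_mem_uIcc hx')),
    ← integral_add_adjacent_intervals ((hfc.mono hux).intervalIntegrable)
      ((hfc.mono hxv).intervalIntegrable)]
  field_simp [(sub_pos.2 huv).ne']
  ring

theorem stmt_12 (f f' : ℝ → ℝ) (u v q : ℝ) (hu : 0 < u) (huv : u < v) (hq : 1 ≤ q)
    (hderiv : ∀ y ∈ interior (Set.Ici (0:ℝ)), HasDerivAt f (f' y) y)
    (hint : IntervalIntegrable f' MeasureTheory.volume u v)
    (hconv : ∀ a ∈ Set.Icc u v, ∀ b ∈ Set.Icc u v, ∀ t ∈ Set.Icc (0:ℝ) 1,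
      |f' (t * a + (1 - t) * b)| ^ q ≤ t * |f' a| ^ q + (1 - t) * |f' b| ^ q)
    (x : ℝ) (hx : x ∈ Set.Icc u v) :
    |((v - x) * (v * f v - u * f x) + (x - u) * (v * f x - u * f u)) / (v - u) ^ 2
        - (1 / (v - u)) * ∫ μ in u..v, f μ|
      ≤ ((v - x) ^ 2 / (v - u) ^ 2) * ((u + v) / 2) ^ (1 - 1 / q) *
          ((1:ℝ) / 6) ^ (1 / q) *
          ((2 * u + v) * |f' x| ^ q + (2 * v + u) * |f' v| ^ q) ^ (1 / q)
        + ((x - u) ^ 2 / (v - u) ^ 2) * ((u + v) / 2) ^ (1 - 1 / q) *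
          ((1:ℝ) / 6) ^ (1 / q) *
          ((2 * v + u) * |f' x| ^ q + (2 * u + v) * |f' u| ^ q) ^ (1 / q) := by
  have hf : ∀ t ∈ Icc u v, HasDerivAt f (f' t) t := fun t ht ↦
    hderiv t (by rw [interior_Ici]; exact hu.trans_le ht.1)
  have hconvex : ConvexOn ℝ (Icc u v) (fun t ↦ |f' t| ^ q) := by
    refine ⟨convex_Icc u v, fun a ha b hb s t hs ht hst ↦ ?_⟩
    obtain rfl : t = 1 - s := by linarith
    simpa only [smul_eq_mul] using hconv a ha b hb s ⟨hs, by linarith⟩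
  have hxv : Icc x v ⊆ Icc u v := Icc_subset_Icc hx.1 le_rfl
  have hux : Icc u x ⊆ Icc u v := Icc_subset_Icc le_rfl hx.2
  have bound_xv := abs_integral_affine_mul_le_of_convexOn hq hx.2 hu.le (hu.trans huv).le
    (hint.mono_set (uIcc_subset_uIcc (Icc_subset_uIcc hx) right_mem_uIcc))
    (hconvex.subset hxv (convex_Icc x v))
  have bound_ux := abs_integral_affine_mul_le_of_convexOn hq hx.1 hu.le (hu.trans huv).le
    (hint.mono_set (uIcc_subset_uIcc left_mem_uIcc (Icc_subset_uIcc hx)))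
    (hconvex.subset hux (convex_Icc u x))
  rw [sub_average_eq_integral_affine_mul_deriv huv hx hf hint, abs_div, abs_sq]
  rw [add_comm ((2 * u + v) * |f' u| ^ q)] at bound_ux
  refine (div_le_div_of_nonneg_right (abs_add_le _ _) (sq_nonneg _)).trans ?_
  refine (div_le_div_of_nonneg_right (add_le_add bound_xv bound_ux) (sq_nonneg _)).trans_eq ?_
  ring
end

section
/- Let J = [0,∞) and let f : J → ℝ be differentiable on the interior of J with f' integrable on [u,v], where u, v ∈ J and 0 < u < v. Let q ≥ 1 and s ∈ (0,1]. If |f'|^q is s-convex in the second sense on [u,v], then |(v·f(v) - u·f(u))/(v-u) - (1/(v-u))·∫_u^v f(μ) dμ| ≤ A(u,v)^{1-1/q}·(1/((s+1)(s+2)))^{1/q}·(((s+1)u+v)·|f'(u)|^q + ((s+1)v+u)·|f'(v)|^q)^{1/q}. -/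
/-!
Integration by parts turns the left-hand side into `|∫ x f'(x) dx| / (v - u)`. Hölder's
inequality for the weight `x dx` bounds `∫ x |f'(x)| dx` by
`(∫ x dx)^(1 - 1/q) (∫ x |f'(x)|^q dx)^(1/q)`, with `∫ x dx = (v - u) A(u, v)`. Writing
`x = t u + (1 - t) v`, s-convexity gives `|f'(x)|^q ≤ t^s |f'(u)|^q + (1 - t)^s |f'(v)|^q`, and
integrating this against `x dx` produces exactly the constants `((s + 1) u + v) / ((s + 1) (s + 2))`
and `((s + 1) v + u) / ((s + 1) (s + 2))`.
-/

open MeasureTheory Set intervalIntegral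

section WeightedPowerIntegrals

variable {u v : ℝ}

theorem integral_div_sub_rpow {r : ℝ} (huv : u ≠ v) (hr : -1 < r) :
    ∫ x in u..v, ((x - u) / (v - u)) ^ r = (v - u) / (r + 1) := by
  have h : v - u ≠ 0 := sub_ne_zero.2 huv.symm
  simp_rw [sub_div _ u]
  rw [integral_comp_div_sub (fun x => x ^ r) h, sub_self, ← sub_div, div_self h,
    integral_rpow (Or.inl hr)]
  simp [Real.zero_rpow (by linarith : r + 1 ≠ 0), div_eq_mul_inv, sub_mul]

theorem integral_sub_div_rpow {r : ℝ} (huv : u ≠ v) (hr : -1 < r) :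
    ∫ x in u..v, ((v - x) / (v - u)) ^ r = (v - u) / (r + 1) := by
  have h : v - u ≠ 0 := sub_ne_zero.2 huv.symm
  simp_rw [sub_div v]
  rw [integral_comp_sub_div (fun x => x ^ r) h, sub_self, ← sub_div, div_self h,
    integral_rpow (Or.inl hr)]
  simp [Real.zero_rpow (by linarith : r + 1 ≠ 0), div_eq_mul_inv, sub_mul]

variable {s : ℝ}

theorem integral_mul_div_sub_rpow (huv : u < v) (hs : 0 ≤ s) :
    ∫ x in u..v, x * ((x - u) / (v - u)) ^ s
      = (v - u) * (u + (s + 1) * v) / ((s + 1) * (s + 2)) := by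
  have hvu : v - u ≠ 0 := by linarith
  have hsplit : EqOn (fun x => x * ((x - u) / (v - u)) ^ s)
      (fun x => u * ((x - u) / (v - u)) ^ s + (v - u) * ((x - u) / (v - u)) ^ (s + 1))
      (uIcc u v) := by
    intro x hx
    rw [uIcc_of_le huv.le] at hx
    dsimp only
    rw [Real.rpow_add_one' (div_nonneg (by linarith [hx.1]) (by linarith)) (by linarith)]
    field_simp
    ring
  have hpow (r : ℝ) (hr : 0 ≤ r) :
      IntervalIntegrable (fun x => ((x - u) / (v - u)) ^ r) volume u v :=
    (Continuous.rpow_const (by fun_prop) fun _ => Or.inr hr).intervalIntegrable u v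
  rw [integral_congr hsplit,
    integral_add ((hpow s hs).const_mul _) ((hpow _ (by linarith)).const_mul _),
    intervalIntegral.integral_const_mul, intervalIntegral.integral_const_mul,
    integral_div_sub_rpow huv.ne (by linarith), integral_div_sub_rpow huv.ne (by linarith)]
  field_simp
  ring

theorem integral_mul_sub_div_rpow (huv : u < v) (hs : 0 ≤ s) :
    ∫ x in u..v, x * ((v - x) / (v - u)) ^ s
      = (v - u) * ((s + 1) * u + v) / ((s + 1) * (s + 2)) := by
  have hvu : v - u ≠ 0 := by linarith
  have hsplit : EqOn (fun x => x * ((v - x) / (v - u)) ^ s)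
      (fun x => v * ((v - x) / (v - u)) ^ s - (v - u) * ((v - x) / (v - u)) ^ (s + 1))
      (uIcc u v) := by
    intro x hx
    rw [uIcc_of_le huv.le] at hx
    dsimp only
    rw [Real.rpow_add_one' (div_nonneg (by linarith [hx.2]) (by linarith)) (by linarith)]
    field_simp
    ring
  have hpow (r : ℝ) (hr : 0 ≤ r) :
      IntervalIntegrable (fun x => ((v - x) / (v - u)) ^ r) volume u v :=
    (Continuous.rpow_const (by fun_prop) fun _ => Or.inr hr).intervalIntegrable u v
  rw [integral_congr hsplit,
    integral_sub ((hpow s hs).const_mul _) ((hpow _ (by linarith)).const_mul _),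
    intervalIntegral.integral_const_mul, intervalIntegral.integral_const_mul,
    integral_sub_div_rpow huv.ne (by linarith), integral_sub_div_rpow huv.ne (by linarith)]
  field_simp
  ring

end WeightedPowerIntegrals

/-- Breckner's s-convexity (s-convexity in the second sense) of a nonnegative function. -/
def SConvexOn (s : ℝ) (D : Set ℝ) (g : ℝ → ℝ) : Prop :=
  (∀ x ∈ D, 0 ≤ g x) ∧
    ∀ a ∈ D, ∀ b ∈ D, ∀ t ∈ Icc (0 : ℝ) 1,
      g (t * a + (1 - t) * b) ≤ t ^ s * g a + (1 - t) ^ s * g b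

namespace SConvexOn

variable {s u v : ℝ} {g : ℝ → ℝ}

theorem le_of_mem_Icc (hg : SConvexOn s (Icc u v) g) (huv : u < v) {x : ℝ} (hx : x ∈ Icc u v) :
    g x ≤ ((v - x) / (v - u)) ^ s * g u + ((x - u) / (v - u)) ^ s * g v := by
  have hvu : v - u ≠ 0 := by linarith
  have ht : (v - x) / (v - u) ∈ Icc (0 : ℝ) 1 :=
    ⟨div_nonneg (by linarith [hx.2]) (by linarith),
      (div_le_one₀ (by linarith)).2 (by linarith [hx.1])⟩
  have h := hg.2 u (left_mem_Icc.2 huv.le) v (right_mem_Icc.2 huv.le) _ ht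
  rwa [show (v - x) / (v - u) * u + (1 - (v - x) / (v - u)) * v = x by field_simp; ring,
    show 1 - (v - x) / (v - u) = (x - u) / (v - u) by field_simp; ring] at h

theorem le_add (hg : SConvexOn s (Icc u v) g) (hs : 0 ≤ s) (huv : u < v) {x : ℝ}
    (hx : x ∈ Icc u v) : g x ≤ g u + g v := by
  have hvu : 0 < v - u := by linarith
  have hu := hg.1 u (left_mem_Icc.2 huv.le)
  have hv := hg.1 v (right_mem_Icc.2 huv.le)
  have h₁ : ((v - x) / (v - u)) ^ s ≤ 1 :=
    Real.rpow_le_one (div_nonneg (by linarith [hx.2]) hvu.le)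
      ((div_le_one₀ hvu).2 (by linarith [hx.1])) hs
  have h₂ : ((x - u) / (v - u)) ^ s ≤ 1 :=
    Real.rpow_le_one (div_nonneg (by linarith [hx.1]) hvu.le)
      ((div_le_one₀ hvu).2 (by linarith [hx.2])) hs
  calc g x ≤ ((v - x) / (v - u)) ^ s * g u + ((x - u) / (v - u)) ^ s * g v :=
        hg.le_of_mem_Icc huv hx
    _ ≤ 1 * g u + 1 * g v := by gcongr
    _ = g u + g v := by ring

theorem intervalIntegrable (hg : SConvexOn s (Icc u v) g) (hs : 0 ≤ s) (huv : u < v)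
    (hm : AEStronglyMeasurable g (volume.restrict (Ioc u v))) :
    IntervalIntegrable g volume u v := by
  refine (intervalIntegrable_iff_integrableOn_Ioc_of_le huv.le).2
    (.of_bound measure_Ioc_lt_top hm (g u + g v) ?_)
  refine ae_restrict_of_forall_mem measurableSet_Ioc fun x hx => ?_
  rw [Real.norm_of_nonneg (hg.1 x (Ioc_subset_Icc_self hx))]
  exact hg.le_add hs huv (Ioc_subset_Icc_self hx)

theorem integral_mul_le (hg : SConvexOn s (Icc u v) g) (hs : 0 ≤ s) (hu : 0 ≤ u) (huv : u < v)
    (hgi : IntervalIntegrable g volume u v) :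
    ∫ x in u..v, x * g x ≤
      (v - u) / ((s + 1) * (s + 2)) * (((s + 1) * u + v) * g u + ((s + 1) * v + u) * g v) := by
  have hpow (w : ℝ → ℝ) (hw : Continuous w) :
      IntervalIntegrable (fun x => x * (w x) ^ s) volume u v :=
    ((continuous_id.mul (hw.rpow_const fun _ => Or.inr hs))).intervalIntegrable u v
  have hA := (hpow (fun x => (v - x) / (v - u)) (by fun_prop)).const_mul (g u)
  have hB := (hpow (fun x => (x - u) / (v - u)) (by fun_prop)).const_mul (g v)
  calc ∫ x in u..v, x * g x
      ≤ ∫ x in u..v, g u * (x * ((v - x) / (v - u)) ^ s) + g v * (x * ((x - u) / (v - u)) ^ s) := by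
        refine integral_mono_on huv.le (hgi.continuousOn_mul continuousOn_id) (hA.add hB) ?_
        intro x hx
        have := mul_le_mul_of_nonneg_left (hg.le_of_mem_Icc huv hx) (hu.trans hx.1)
        linarith
    _ = (v - u) / ((s + 1) * (s + 2)) * (((s + 1) * u + v) * g u + ((s + 1) * v + u) * g v) := by
        rw [integral_add hA hB, intervalIntegral.integral_const_mul,
          intervalIntegral.integral_const_mul, integral_mul_sub_div_rpow huv hs,
          integral_mul_div_sub_rpow huv hs]
        ring

end SConvexOn

theorem integral_mul_le_rpow_integral_mul_rpow {α : Type*} [MeasurableSpace α] {μ : Measure α}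
    {w g : α → ℝ} {q : ℝ} (hq : 1 ≤ q) (hw : 0 ≤ᵐ[μ] w) (hg : 0 ≤ᵐ[μ] g) (hwi : Integrable w μ)
    (hgm : AEStronglyMeasurable g μ) (hwg : Integrable (fun x => w x * g x ^ q) μ) :
    ∫ x, w x * g x ∂μ ≤ (∫ x, w x ∂μ) ^ (1 - 1 / q) * (∫ x, w x * g x ^ q ∂μ) ^ (1 / q) := by
  rcases hq.eq_or_lt with rfl | hq
  · simp
  set p := (1 - q⁻¹)⁻¹
  have hpq : p.HolderConjugate q := by
    simpa using Real.HolderConjugate.one_sub_inv_inv (inv_pos.2 (by linarith))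
      (inv_lt_one_of_one_lt₀ hq)
  have hwm (r : ℝ) : AEStronglyMeasurable (fun x => w x ^ r) μ :=
    (hwi.aestronglyMeasurable.aemeasurable.pow_const r).aestronglyMeasurable
  have hF : MemLp (fun x => w x ^ p⁻¹) (ENNReal.ofReal p) μ := by
    refine (integrable_norm_rpow_iff (hwm _) (by simp [hpq.pos]) ENNReal.ofReal_ne_top).1
      (hwi.congr ?_)
    filter_upwards [hw] with x hx
    rw [ENNReal.toReal_ofReal hpq.nonneg, Real.norm_of_nonneg (Real.rpow_nonneg hx _),
      Real.rpow_inv_rpow hx hpq.ne_zero]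
  have hG : MemLp (fun x => w x ^ q⁻¹ * g x) (ENNReal.ofReal q) μ := by
    refine (integrable_norm_rpow_iff ((hwm _).mul hgm) (by simp [hpq.symm.pos])
      ENNReal.ofReal_ne_top).1 (hwg.congr ?_)
    filter_upwards [hw, hg] with x hwx hgx
    rw [ENNReal.toReal_ofReal hpq.symm.nonneg, Pi.mul_apply,
      Real.norm_of_nonneg (mul_nonneg (Real.rpow_nonneg hwx _) hgx),
      Real.mul_rpow (Real.rpow_nonneg hwx _) hgx, Real.rpow_inv_rpow hwx hpq.symm.ne_zero]
  have holder := integral_mul_le_Lp_mul_Lq_of_nonneg hpq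
    (hw.mono fun x hx => Real.rpow_nonneg hx _)
    (by filter_upwards [hw, hg] with x hwx hgx; exact mul_nonneg (Real.rpow_nonneg hwx _) hgx) hF hG
  have hFG : ∫ x, w x ^ p⁻¹ * (w x ^ q⁻¹ * g x) ∂μ = ∫ x, w x * g x ∂μ := by
    refine integral_congr_ae (hw.mono fun x hx => ?_)
    dsimp only
    rw [← mul_assoc, ← Real.rpow_add' hx (by simp [hpq.inv_add_inv_eq_one]),
      hpq.inv_add_inv_eq_one, Real.rpow_one]
  have hFp : ∫ x, (w x ^ p⁻¹) ^ p ∂μ = ∫ x, w x ∂μ :=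
    integral_congr_ae (hw.mono fun x hx => Real.rpow_inv_rpow hx hpq.ne_zero)
  have hGq : ∫ x, (w x ^ q⁻¹ * g x) ^ q ∂μ = ∫ x, w x * g x ^ q ∂μ := by
    refine integral_congr_ae ?_
    filter_upwards [hw, hg] with x hwx hgx
    rw [Real.mul_rpow (Real.rpow_nonneg hwx _) hgx, Real.rpow_inv_rpow hwx hpq.symm.ne_zero]
  rw [hFG, hFp, hGq] at holder
  simpa only [one_div, hpq.symm.one_sub_inv] using holder

theorem mul_rpow_one_sub_mul_mul_rpow {h a b : ℝ} (hh : 0 ≤ h) (ha : 0 ≤ a) (hb : 0 ≤ b) (r : ℝ) :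
    (h * a) ^ (1 - r) * (h * b) ^ r = h * (a ^ (1 - r) * b ^ r) := by
  rw [Real.mul_rpow hh ha, Real.mul_rpow hh hb]
  calc h ^ (1 - r) * a ^ (1 - r) * (h ^ r * b ^ r) = h ^ (1 - r + r) * (a ^ (1 - r) * b ^ r) := by
        rw [Real.rpow_add' hh (by simp)]; ring
    _ = h * (a ^ (1 - r) * b ^ r) := by rw [sub_add_cancel, Real.rpow_one]

theorem integral_id_mul_le_rpow {g : ℝ → ℝ} {u v q : ℝ} (hu : 0 ≤ u) (huv : u ≤ v) (hq : 1 ≤ q)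
    (hg : ∀ x ∈ Ioc u v, 0 ≤ g x) (hgm : AEStronglyMeasurable g (volume.restrict (Ioc u v)))
    (hgi : IntervalIntegrable (fun x => x * g x ^ q) volume u v) :
    ∫ x in u..v, x * g x
      ≤ ((v - u) * ((u + v) / 2)) ^ (1 - 1 / q) * (∫ x in u..v, x * g x ^ q) ^ (1 / q) := by
  have hmean : (v - u) * ((u + v) / 2) = ∫ x in Ioc u v, x := by
    rw [← integral_of_le huv, integral_id]
    ring
  rw [hmean, integral_of_le huv, integral_of_le huv]
  exact integral_mul_le_rpow_integral_mul_rpow hq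
    (ae_restrict_of_forall_mem measurableSet_Ioc fun x hx => hu.trans hx.1.le)
    (ae_restrict_of_forall_mem measurableSet_Ioc hg)
    ((intervalIntegrable_iff_integrableOn_Ioc_of_le huv).1 intervalIntegrable_id) hgm
    ((intervalIntegrable_iff_integrableOn_Ioc_of_le huv).1 hgi)

theorem integral_id_mul_deriv {f f' : ℝ → ℝ} {u v : ℝ}
    (hf : ∀ x ∈ uIcc u v, HasDerivAt f (f' x) x) (hf' : IntervalIntegrable f' volume u v) :
    ∫ x in u..v, x * f' x = v * f v - u * f u - ∫ x in u..v, f x := by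
  simpa using integral_mul_deriv_eq_deriv_mul (fun x _ => hasDerivAt_id x) hf
    intervalIntegrable_const hf'

theorem stmt_13_general (f f' : ℝ → ℝ) (u v q s : ℝ) (hu : 0 < u) (huv : u < v)
    (hq : 1 ≤ q) (hs0 : 0 < s)
    (hderiv : ∀ y ∈ interior (Set.Ici (0:ℝ)), HasDerivAt f (f' y) y)
    (hint : IntervalIntegrable f' MeasureTheory.volume u v)
    (hsconv : ∀ a ∈ Set.Icc u v, ∀ b ∈ Set.Icc u v, ∀ t ∈ Set.Icc (0:ℝ) 1,
      |f' (t * a + (1 - t) * b)| ^ q ≤ t ^ s * |f' a| ^ q + (1 - t) ^ s * |f' b| ^ q) :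
    |(v * f v - u * f u) / (v - u) - (1 / (v - u)) * ∫ μ in u..v, f μ|
      ≤ ((u + v) / 2) ^ (1 - 1 / q) * (1 / ((s + 1) * (s + 2))) ^ (1 / q) *
          (((s + 1) * u + v) * |f' u| ^ q + ((s + 1) * v + u) * |f' v| ^ q) ^ (1 / q) := by
  have hvu : 0 < v - u := sub_pos.2 huv
  have hv : 0 < v := hu.trans huv
  have hf'm : AEStronglyMeasurable f' (volume.restrict (Ioc u v)) :=
    ((intervalIntegrable_iff_integrableOn_Ioc_of_le huv.le).1 hint).1
  have hg : SConvexOn s (Icc u v) fun x => |f' x| ^ q := ⟨fun x _ => by positivity, hsconv⟩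
  have hgi : IntervalIntegrable (fun x => |f' x| ^ q) volume u v :=
    hg.intervalIntegrable hs0.le huv (hf'm.norm.aemeasurable.pow_const q).aestronglyMeasurable
  have hparts := integral_id_mul_deriv (fun x hx =>
    hderiv x (by rw [interior_Ici]; exact hu.trans_le (uIcc_of_le huv.le ▸ hx).1)) hint
  have habs : |∫ x in u..v, x * f' x| ≤ ∫ x in u..v, x * |f' x| := by
    refine (abs_integral_le_integral_abs huv.le).trans_eq (integral_congr fun x hx => ?_)
    rw [uIcc_of_le huv.le] at hx
    simp [abs_mul, abs_of_nonneg (hu.le.trans hx.1)]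
  have hholder := integral_id_mul_le_rpow hu.le huv.le hq (fun x _ => abs_nonneg (f' x)) hf'm.norm
    (hgi.continuousOn_mul continuousOn_id)
  have hconv := hg.integral_mul_le hs0.le hu.le huv hgi
  calc |(v * f v - u * f u) / (v - u) - (1 / (v - u)) * ∫ μ in u..v, f μ|
      = |∫ x in u..v, x * f' x| / (v - u) := by
        rw [hparts, ← abs_of_pos hvu, ← abs_div, abs_of_pos hvu]
        congr 1
        field_simp
    _ ≤ ((v - u) * ((u + v) / 2)) ^ (1 - 1 / q) * ((v - u) * (1 / ((s + 1) * (s + 2)) *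
          (((s + 1) * u + v) * |f' u| ^ q + ((s + 1) * v + u) * |f' v| ^ q))) ^ (1 / q)
          / (v - u) := by
        gcongr ?_ / _
        refine habs.trans (hholder.trans ?_)
        gcongr
        · exact integral_nonneg huv.le fun x hx => by have := hu.trans_le hx.1; positivity
        · exact hconv.trans_eq (by ring)
    _ = ((u + v) / 2) ^ (1 - 1 / q) * (1 / ((s + 1) * (s + 2))) ^ (1 / q) *
          (((s + 1) * u + v) * |f' u| ^ q + ((s + 1) * v + u) * |f' v| ^ q) ^ (1 / q) := by
        rw [mul_rpow_one_sub_mul_mul_rpow hvu.le (by positivity) (by positivity),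
          Real.mul_rpow (by positivity) (by positivity)]
        field_simp

theorem stmt_13 (f f' : ℝ → ℝ) (u v q s : ℝ) (hu : 0 < u) (huv : u < v)
    (hq : 1 ≤ q) (hs0 : 0 < s) (hs1 : s ≤ 1)
    (hderiv : ∀ y ∈ interior (Set.Ici (0:ℝ)), HasDerivAt f (f' y) y)
    (hint : IntervalIntegrable f' MeasureTheory.volume u v)
    (hsconv : ∀ a ∈ Set.Icc u v, ∀ b ∈ Set.Icc u v, ∀ t ∈ Set.Icc (0:ℝ) 1,
      |f' (t * a + (1 - t) * b)| ^ q ≤ t ^ s * |f' a| ^ q + (1 - t) ^ s * |f' b| ^ q) :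
    |(v * f v - u * f u) / (v - u) - (1 / (v - u)) * ∫ μ in u..v, f μ|
      ≤ ((u + v) / 2) ^ (1 - 1 / q) * (1 / ((s + 1) * (s + 2))) ^ (1 / q) *
          (((s + 1) * u + v) * |f' u| ^ q + ((s + 1) * v + u) * |f' v| ^ q) ^ (1 / q) :=
  stmt_13_general f f' u v q s hu huv hq hs0 hderiv hint hsconv
end
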